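/- arXiv:2310.13576 — 2 statements merged into one kernel-verified Lean document; each statement's English description precedes it below -/
import Mathlib

section
/- Let G be a DAG, let (i,j) be addition-safe, and let G' = G ∪ {(i,j)}. Then the ancestor set (in G') of any vertex v satisfies: An_{G'}(v) = An_G(v) if j ∉ An_G(v), and An_{G'}(v) = An_G(v) ∪ An_G(i) if j ∈ An_G(v). -/
/-! A path in `G'` that never returns from `j` to `i` uses the new edge `(i, j)` at most once,
so it is either a path of `G` or a path of `G` to `i`, the edge, and a path of `G` from `j`.
Acyclicity of `G'` rules out a return from `j` to `i`, since together with the edge it would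
close a cycle. -/

def addEdge {V : Type*} (E : V → V → Prop) (i j : V) : V → V → Prop :=
  fun a b => E a b ∨ (a = i ∧ b = j)

def Acyclic {V : Type*} (E : V → V → Prop) : Prop :=
  ∀ v, ¬ Relation.TransGen E v v

open Relation

section addEdge

variable {V : Type*} {E : V → V → Prop} {i j : V}

theorem addEdge_new : addEdge E i j i j :=
  Or.inr ⟨rfl, rfl⟩

theorem Relation.ReflTransGen.to_addEdge {a b : V} (h : ReflTransGen E a b) :
    ReflTransGen (addEdge E i j) a b :=
  Relation.ReflTransGen.mono (fun _ _ => Or.inl) _ _ h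

theorem Acyclic.not_reflTransGen_addEdge (h : Acyclic (addEdge E i j)) :
    ¬ ReflTransGen (addEdge E i j) j i :=
  fun hji => h i (TransGen.head' addEdge_new hji)

theorem reflTransGen_addEdge_iff (hji : ¬ ReflTransGen (addEdge E i j) j i) {y v : V} :
    ReflTransGen (addEdge E i j) y v ↔
      ReflTransGen E y v ∨ (ReflTransGen E y i ∧ ReflTransGen E j v) := by
  refine ⟨fun h => ?_, ?_⟩
  · induction h with
    | refl => exact Or.inl .refl
    | tail _ hbc ih =>
      rcases hbc with hE | ⟨rfl, rfl⟩
      · rcases ih with hyb | ⟨hyi, hjb⟩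
        · exact Or.inl (hyb.tail hE)
        · exact Or.inr ⟨hyi, hjb.tail hE⟩
      · rcases ih with hyi | ⟨_, hji'⟩
        · exact Or.inr ⟨hyi, .refl⟩
        · exact absurd hji'.to_addEdge hji
  · rintro (hyv | ⟨hyi, hjv⟩)
    · exact hyv.to_addEdge
    · exact (hyi.to_addEdge.tail addEdge_new).trans hjv.to_addEdge

end addEdge

theorem ancestors_after_add_general {V : Type*} (E : V → V → Prop) (i j : V)
    (hG' : Acyclic (addEdge E i j)) (v : V) :
    (¬ Relation.ReflTransGen E j v →
      {y : V | Relation.ReflTransGen (addEdge E i j) y v}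
        = {y : V | Relation.ReflTransGen E y v}) ∧
    (Relation.ReflTransGen E j v →
      {y : V | Relation.ReflTransGen (addEdge E i j) y v}
        = {y : V | Relation.ReflTransGen E y v}
          ∪ {y : V | Relation.ReflTransGen E y i}) := by
  have hpath (y : V) := reflTransGen_addEdge_iff hG'.not_reflTransGen_addEdge (y := y) (v := v)
  refine ⟨fun hjv => Set.ext fun y => ?_, fun hjv => Set.ext fun y => ?_⟩
  · simpa [hjv] using hpath y
  · simpa [hjv] using hpath y

theorem ancestors_after_add {V : Type*} (E : V → V → Prop) (i j : V)
    (hG : Acyclic E) (hG' : Acyclic (addEdge E i j)) (v : V) :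
    (¬ Relation.ReflTransGen E j v →
      {y : V | Relation.ReflTransGen (addEdge E i j) y v}
        = {y : V | Relation.ReflTransGen E y v}) ∧
    (Relation.ReflTransGen E j v →
      {y : V | Relation.ReflTransGen (addEdge E i j) y v}
        = {y : V | Relation.ReflTransGen E y v}
          ∪ {y : V | Relation.ReflTransGen E y i}) :=
  ancestors_after_add_general E i j hG' v
end

section
/- Let G be a DAG and (i,j), (x,y) two distinct candidate non-edges such that each of G ∪ {(i,j)} and G ∪ {(x,y)} is acyclic, but G ∪ {(i,j),(x,y)} contains a cycle. Then in G there exist directed paths from j to x and from y to i. -/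
section addEdge

variable {V : Type*} {R : V → V → Prop} {x y a b : V}

open Relation

lemma reflTransGen_addEdge (h : ReflTransGen (addEdge R x y) a b) :
    ReflTransGen R a b ∨ (ReflTransGen R a x ∧ ReflTransGen R y b) := by
  induction h with
  | refl => exact Or.inl .refl
  | tail _ hstep ih =>
    rcases hstep with hstep | ⟨rfl, rfl⟩
    · exact ih.imp (·.tail hstep) fun ⟨hax, hyb⟩ => ⟨hax, hyb.tail hstep⟩
    · exact Or.inr ⟨ih.elim id And.left, .refl⟩

lemma transGen_addEdge (h : TransGen (addEdge R x y) a b) :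
    TransGen R a b ∨ (ReflTransGen R a x ∧ ReflTransGen R y b) := by
  obtain ⟨c, hac, hcb⟩ := TransGen.tail'_iff.mp h
  rcases hcb with hcb | ⟨rfl, rfl⟩
  · exact (reflTransGen_addEdge hac).imp (TransGen.tail' · hcb)
      fun ⟨hax, hyc⟩ => ⟨hax, hyc.tail hcb⟩
  · exact Or.inr ⟨(reflTransGen_addEdge hac).elim id And.left, .refl⟩

lemma reflTransGen_of_not_acyclic_addEdge (hR : Acyclic R)
    (h : ¬ Acyclic (addEdge R x y)) : ReflTransGen R y x := by
  obtain ⟨v, hv⟩ : ∃ v, TransGen (addEdge R x y) v v := by simpa [Acyclic] using h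
  rcases transGen_addEdge hv with hcycle | ⟨hvx, hyv⟩
  · exact absurd hcycle (hR v)
  · exact hyv.trans hvx

lemma not_reflTransGen_of_acyclic_addEdge (h : Acyclic (addEdge R x y)) :
    ¬ ReflTransGen R y x := fun hyx =>
  h x (TransGen.head' (Or.inr ⟨rfl, rfl⟩) (ReflTransGen.mono (fun _ _ => Or.inl) _ _ hyx))

end addEdge

theorem joint_cycle_paths_general {V : Type*} (E : V → V → Prop) (i j x y : V)
    (hG1 : Acyclic (addEdge E i j)) (hG2 : Acyclic (addEdge E x y))
    (hcyc : ¬ Acyclic (addEdge (addEdge E i j) x y)) :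
    Relation.ReflTransGen E j x ∧ Relation.ReflTransGen E y i := by
  have hyx : Relation.ReflTransGen (addEdge E i j) y x :=
    reflTransGen_of_not_acyclic_addEdge hG1 hcyc
  rcases reflTransGen_addEdge hyx with hyx | ⟨hyi, hjx⟩
  · exact absurd hyx (not_reflTransGen_of_acyclic_addEdge hG2)
  · exact ⟨hjx, hyi⟩

theorem joint_cycle_paths {V : Type*} (E : V → V → Prop) (i j x y : V)
    (hG : Acyclic E) (hne : (i, j) ≠ (x, y))
    (hijE : ¬ E i j) (hxyE : ¬ E x y)
    (hG1 : Acyclic (addEdge E i j)) (hG2 : Acyclic (addEdge E x y))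
    (hcyc : ¬ Acyclic (addEdge (addEdge E i j) x y)) :
    Relation.ReflTransGen E j x ∧ Relation.ReflTransGen E y i :=
  joint_cycle_paths_general E i j x y hG1 hG2 hcyc
end
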